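/- Let λ = (λₙ) and ρ = (ρₙ) be sequences of positive reals. The space of operator sequences A = (Aₙ) in B(H) such that both Σₙ λₙ Aₙ*Aₙ and Σₙ ρₙ AₙAₙ* converge strongly to bounded operators, equipped with the norm ‖A‖ := max( ‖Σₙ λₙ Aₙ*Aₙ‖^{1/2}, ‖Σₙ ρₙ AₙAₙ*‖^{1/2} ), is a complete normed space (every absolutely convergent series converges). -/

import Mathlib

/-! Write `‖A‖_w := sup_{‖h‖ ≤ 1} (∑ₙ wₙ ‖Aₙ h‖²)^{1/2}`, so that the norm of the module is
`max ‖A‖_λ ‖A*‖_ρ`. For a fixed unit vector `h`, Minkowski's inequality in the weighted `ℓ²`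
space turns a pointwise convergent series `∑ₘ A⁽ᵐ⁾ = B` into `‖B‖_w ≤ ∑ₘ ‖A⁽ᵐ⁾‖_w`, and the
adjoint, being an isometry, passes through the series. Since `λₙ > 0`, `‖A‖_λ` dominates
`λₙ^{1/2} ‖Aₙ‖`, so an absolutely convergent series of members converges coordinatewise in
operator norm; applying the subadditivity to its tails shows that the sum is a member and that
the tails tend to zero. -/

open ContinuousLinearMap Filter Topology
open scoped ENNReal NNReal

/-- The norm `max(‖∑ₙ λₙ Aₙ*Aₙ‖^{1/2}, ‖∑ₙ ρₙ AₙAₙ*‖^{1/2})` of an operator sequence in the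
double asymmetrically weighted module, expressed in `ℝ≥0∞` through the quadratic forms
`sup_{‖h‖≤1} ∑ₙ λₙ‖Aₙh‖²` and `sup_{‖h‖≤1} ∑ₙ ρₙ‖Aₙ*h‖²` (which are finite exactly when the
corresponding series converge strongly to bounded operators). -/
noncomputable def dawNorm {H : Type*} [NormedAddCommGroup H] [InnerProductSpace ℂ H]
    [CompleteSpace H] (l r : ℕ → ℝ) (A : ℕ → H →L[ℂ] H) : ℝ≥0∞ :=
  max
    ((⨆ h : {h : H // ‖h‖ ≤ 1}, ∑' n,
        ENNReal.ofReal (l n) * (‖A n (h : H)‖₊ : ℝ≥0∞) ^ 2) ^ ((1 : ℝ) / 2))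
    ((⨆ h : {h : H // ‖h‖ ≤ 1}, ∑' n,
        ENNReal.ofReal (r n) * (‖adjoint (A n) (h : H)‖₊ : ℝ≥0∞) ^ 2) ^ ((1 : ℝ) / 2))

open MeasureTheory

theorem MeasureTheory.lintegral_tsum_rpow_le {α : Type*} [MeasurableSpace α] {μ : Measure α}
    {p : ℝ} (hp : 1 ≤ p) {f : ℕ → α → ℝ≥0∞} (hf : ∀ m, AEMeasurable (f m) μ) :
    (∫⁻ x, (∑' m, f m x) ^ p ∂μ) ^ (1 / p) ≤ ∑' m, (∫⁻ x, f m x ^ p ∂μ) ^ (1 / p) := by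
  have hp0 : 0 < p := by linarith
  have partial_sums (M : ℕ) : (∫⁻ x, (∑ m ∈ Finset.range M, f m x) ^ p ∂μ) ^ (1 / p) ≤
      ∑' m, (∫⁻ x, f m x ^ p ∂μ) ^ (1 / p) := by
    have := eLpNorm'_sum_le (s := Finset.range M) (fun m _ => (hf m).aestronglyMeasurable) hp
    simp only [eLpNorm'_eq_lintegral_enorm, enorm_eq_self, Finset.sum_apply] at this
    exact this.trans (ENNReal.sum_le_tsum _)
  simp only [one_div, ENNReal.rpow_inv_le_iff hp0] at partial_sums ⊢
  calc ∫⁻ x, (∑' m, f m x) ^ p ∂μ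
      = ∫⁻ x, ⨆ M, (∑ m ∈ Finset.range M, f m x) ^ p ∂μ := by
        simp only [ENNReal.tsum_eq_iSup_nat, ← ENNReal.orderIsoRpow_apply p hp0,
          OrderIso.map_iSup]
    _ = ⨆ M, ∫⁻ x, (∑ m ∈ Finset.range M, f m x) ^ p ∂μ :=
        lintegral_iSup' (fun M => (Finset.aemeasurable_fun_sum _ fun m _ => hf m).pow_const p)
          (ae_of_all _ fun x M N hMN => ENNReal.rpow_le_rpow
            (Finset.sum_le_sum_of_subset (Finset.range_subset_range.2 hMN)) hp0.le)
    _ ≤ _ := iSup_le partial_sums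

theorem ENNReal.tsum_mul_tsum_rpow_le {ι : Type*} {p : ℝ} (hp : 1 ≤ p) (w : ι → ℝ≥0∞)
    (b : ℕ → ι → ℝ≥0∞) :
    (∑' i, w i * (∑' m, b m i) ^ p) ^ (1 / p) ≤ ∑' m, (∑' i, w i * b m i ^ p) ^ (1 / p) := by
  let _ : MeasurableSpace ι := ⊤
  have h := lintegral_tsum_rpow_le hp (μ := Measure.count.withDensity w) (f := b)
    fun m => .of_discrete
  simpa only [Pi.mul_apply, lintegral_count,
    lintegral_withDensity_eq_lintegral_mul _ Measurable.of_discrete Measurable.of_discrete] using h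

theorem ContinuousLinearMap.opENorm_le_iSup_unitClosedBall {𝕜 E F : Type*}
    [DenselyNormedField 𝕜] [NormedAddCommGroup E] [NormedSpace 𝕜 E]
    [SeminormedAddCommGroup F] [NormedSpace 𝕜 F] (f : E →L[𝕜] F) :
    ‖f‖ₑ ≤ ⨆ x : {x : E // ‖x‖ ≤ 1}, ‖f x‖ₑ := by
  refine le_of_forall_lt fun c hc => ?_
  lift c to ℝ≥0 using hc.ne_top
  obtain ⟨x, hx, hcx⟩ := f.exists_lt_apply_of_lt_opNNNorm (ENNReal.coe_lt_coe.1 hc)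
  exact (ENNReal.coe_lt_coe.2 hcx).trans_le (le_iSup_of_le ⟨x, hx.le⟩ le_rfl)

section WeightedL2OpNorm

variable {𝕜 E F ι : Type*} [NontriviallyNormedField 𝕜] [NormedAddCommGroup E] [NormedSpace 𝕜 E]
  [NormedAddCommGroup F] [NormedSpace 𝕜 F]

/-- The norm `‖∑ₙ wₙ Aₙ*Aₙ‖^{1/2}` of the paper, for operators between normed spaces. -/
noncomputable def weightedL2OpNorm (w : ι → ℝ≥0∞) (A : ι → E →L[𝕜] F) : ℝ≥0∞ :=
  (⨆ h : {h : E // ‖h‖ ≤ 1}, ∑' n, w n * ‖A n h‖ₑ ^ 2) ^ ((1 : ℝ) / 2)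

theorem weightedL2OpNorm_le_tsum_of_hasSum (w : ι → ℝ≥0∞) {C : ℕ → ι → E →L[𝕜] F}
    {D : ι → E →L[𝕜] F} (hD : ∀ n, HasSum (fun m => C m n) (D n)) :
    weightedL2OpNorm w D ≤ ∑' m, weightedL2OpNorm w (C m) := by
  rw [weightedL2OpNorm, one_div, ENNReal.rpow_inv_le_iff two_pos, ENNReal.rpow_two]
  refine iSup_le fun h => ?_
  have hpt (n : ι) : ‖D n h‖ₑ ≤ ∑' m, ‖C m n h‖ₑ := by
    have hx : HasSum (fun m => C m n h) (D n h) := (hD n).mapL (apply 𝕜 F (h : E))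
    exact hx.enorm_le_of_bounded ENNReal.summable.hasSum fun _ => le_rfl
  have hmink := ENNReal.tsum_mul_tsum_rpow_le one_le_two w fun m n => ‖C m n h‖ₑ
  rw [one_div, ENNReal.rpow_inv_le_iff two_pos] at hmink
  simp only [ENNReal.rpow_two] at hmink
  calc ∑' n, w n * ‖D n h‖ₑ ^ 2 ≤ ∑' n, w n * (∑' m, ‖C m n h‖ₑ) ^ 2 := by gcongr; exact hpt _
    _ ≤ (∑' m, (∑' n, w n * ‖C m n h‖ₑ ^ 2) ^ (2⁻¹ : ℝ)) ^ 2 := hmink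
    _ ≤ (∑' m, weightedL2OpNorm w (C m)) ^ 2 := by
        gcongr with m
        rw [weightedL2OpNorm, one_div]
        exact ENNReal.rpow_le_rpow
          (le_iSup (fun h : {h : E // ‖h‖ ≤ 1} => ∑' n, w n * ‖C m n h‖ₑ ^ 2) h) (by norm_num)

end WeightedL2OpNorm

section WeightedL2OpNormDense

variable {𝕜 E F ι : Type*} [DenselyNormedField 𝕜] [NormedAddCommGroup E] [NormedSpace 𝕜 E]
  [NormedAddCommGroup F] [NormedSpace 𝕜 F]

theorem rpow_mul_opENorm_le_weightedL2OpNorm (w : ι → ℝ≥0∞) (A : ι → E →L[𝕜] F) (n : ι) :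
    w n ^ ((1 : ℝ) / 2) * ‖A n‖ₑ ≤ weightedL2OpNorm w A := by
  have hsq : w n * ‖A n‖ₑ ^ 2 ≤ ⨆ h : {h : E // ‖h‖ ≤ 1}, ∑' n, w n * ‖A n h‖ₑ ^ 2 :=
    calc w n * ‖A n‖ₑ ^ 2 ≤ w n * (⨆ h : {h : E // ‖h‖ ≤ 1}, ‖A n h‖ₑ) ^ 2 := by
          gcongr; exact (A n).opENorm_le_iSup_unitClosedBall
      _ = ⨆ h : {h : E // ‖h‖ ≤ 1}, w n * ‖A n h‖ₑ ^ 2 := by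
          have : Nonempty {h : E // ‖h‖ ≤ 1} := ⟨⟨0, by simp⟩⟩
          rw [ENNReal.iSup_pow, ENNReal.mul_iSup]
      _ ≤ _ := iSup_mono fun h => ENNReal.le_tsum (f := fun n => w n * ‖A n h‖ₑ ^ 2) n
  calc w n ^ ((1 : ℝ) / 2) * ‖A n‖ₑ = (w n * ‖A n‖ₑ ^ 2) ^ ((1 : ℝ) / 2) := by
        rw [ENNReal.mul_rpow_of_nonneg _ _ (by norm_num), ← ENNReal.rpow_natCast,
          ← ENNReal.rpow_mul]
        norm_num
    _ ≤ weightedL2OpNorm w A := ENNReal.rpow_le_rpow hsq (by norm_num)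

theorem summable_of_tsum_weightedL2OpNorm_ne_top [CompleteSpace F] {w : ι → ℝ≥0∞}
    {C : ℕ → ι → E →L[𝕜] F} {n : ι} (hw : w n ≠ 0)
    (hC : ∑' m, weightedL2OpNorm w (C m) ≠ ⊤) : Summable fun m => C m n := by
  refine Summable.of_norm (tsum_enorm_ne_top_iff_summable_norm.1 ?_)
  have hmul : w n ^ ((1 : ℝ) / 2) * ∑' m, ‖C m n‖ₑ ≠ ⊤ := by
    refine ne_top_of_le_ne_top hC ?_
    rw [← ENNReal.tsum_mul_left]
    exact ENNReal.tsum_le_tsum fun m => rpow_mul_opENorm_le_weightedL2OpNorm w (C m) n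
  exact (ENNReal.lt_top_of_mul_ne_top_right hmul (by simp [hw])).ne

end WeightedL2OpNormDense

section DawNorm

variable {H : Type*} [NormedAddCommGroup H] [InnerProductSpace ℂ H] [CompleteSpace H]

theorem dawNorm_eq (l r : ℕ → ℝ) (A : ℕ → H →L[ℂ] H) :
    dawNorm l r A = max (weightedL2OpNorm (fun n => ENNReal.ofReal (l n)) A)
      (weightedL2OpNorm (fun n => ENNReal.ofReal (r n)) fun n => adjoint (A n)) :=
  rfl

theorem dawNorm_le_tsum_of_hasSum (l r : ℕ → ℝ) {C : ℕ → ℕ → H →L[ℂ] H} {D : ℕ → H →L[ℂ] H}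
    (hD : ∀ n, HasSum (fun m => C m n) (D n)) :
    dawNorm l r D ≤ ∑' m, dawNorm l r (C m) := by
  have hD' (n : ℕ) : HasSum (fun m => adjoint (C m n)) (adjoint (D n)) :=
    (hD n).map (adjoint : (H →L[ℂ] H) ≃ₗᵢ⋆[ℂ] (H →L[ℂ] H)) (LinearIsometryEquiv.continuous _)
  simp only [dawNorm_eq]
  exact max_le
    ((weightedL2OpNorm_le_tsum_of_hasSum _ hD).trans
      (ENNReal.tsum_le_tsum fun m => le_max_left _ _))
    ((weightedL2OpNorm_le_tsum_of_hasSum _ hD').trans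
      (ENNReal.tsum_le_tsum fun m => le_max_right _ _))

theorem summable_of_tsum_dawNorm_ne_top {l : ℕ → ℝ} (r : ℕ → ℝ) {C : ℕ → ℕ → H →L[ℂ] H}
    {n : ℕ} (hl : 0 < l n) (hC : ∑' m, dawNorm l r (C m) ≠ ⊤) :
    Summable fun m => C m n :=
  summable_of_tsum_weightedL2OpNorm_ne_top (by simpa using hl)
    (ne_top_of_le_ne_top hC (ENNReal.tsum_le_tsum fun m => le_max_left _ _))

end DawNorm

theorem daw_module_complete_general {H : Type*} [NormedAddCommGroup H] [InnerProductSpace ℂ H]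
    [CompleteSpace H]
    (l r : ℕ → ℝ) (hl : ∀ n, 0 < l n)
    (A : ℕ → ℕ → H →L[ℂ] H) (habs : ∑' m, dawNorm l r (A m) ≠ ⊤) :
    ∃ B : ℕ → H →L[ℂ] H, dawNorm l r B ≠ ⊤ ∧
      (∀ n, HasSum (fun m => A m n) (B n)) ∧
      Tendsto (fun M => dawNorm l r (fun n => B n - ∑ m ∈ Finset.range M, A m n))
        atTop (𝓝 0) := by
  have hsum (n : ℕ) : Summable fun m => A m n := summable_of_tsum_dawNorm_ne_top r (hl n) habs
  have htail (M : ℕ) : dawNorm l r (fun n => ∑' m, A m n - ∑ m ∈ Finset.range M, A m n) ≤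
      ∑' m, dawNorm l r (A (m + M)) :=
    dawNorm_le_tsum_of_hasSum l r fun n => (hasSum_nat_add_iff' M).2 (hsum n).hasSum
  refine ⟨fun n => ∑' m, A m n, ?_, fun n => (hsum n).hasSum, ?_⟩
  · exact ne_top_of_le_ne_top habs (dawNorm_le_tsum_of_hasSum l r fun n => (hsum n).hasSum)
  · exact tendsto_of_tendsto_of_tendsto_of_le_of_le tendsto_const_nhds
      (ENNReal.tendsto_sum_nat_add _ habs) (fun _ => zero_le) htail

/-- The double asymmetrically weighted module
`{(Aₙ) : ∑ₙ λₙAₙ*Aₙ and ∑ₙ ρₙAₙAₙ* converge strongly}` with norm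
`max(‖∑ₙ λₙAₙ*Aₙ‖^{1/2}, ‖∑ₙ ρₙAₙAₙ*‖^{1/2})` is complete: every absolutely convergent
series `∑ₘ A⁽ᵐ⁾` of members converges in the space to a member `B`. -/
theorem daw_module_complete {H : Type*} [NormedAddCommGroup H] [InnerProductSpace ℂ H]
    [CompleteSpace H] [TopologicalSpace.SeparableSpace H]
    (l r : ℕ → ℝ) (hl : ∀ n, 0 < l n) (hr : ∀ n, 0 < r n)
    (A : ℕ → ℕ → H →L[ℂ] H) (habs : ∑' m, dawNorm l r (A m) ≠ ⊤) :
    ∃ B : ℕ → H →L[ℂ] H, dawNorm l r B ≠ ⊤ ∧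
      (∀ n, HasSum (fun m => A m n) (B n)) ∧
      Tendsto (fun M => dawNorm l r (fun n => B n - ∑ m ∈ Finset.range M, A m n))
        atTop (𝓝 0) :=
  daw_module_complete_general l r hl A habs
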